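/- The linear (polynomial) part of a positive real transfer function is symmetric positive semidefinite: let A₁ ∈ ℝ^{n₁×n₁} have no eigenvalue with positive real part, let B₁ ∈ ℝ^{n₁×m}, C₁ ∈ ℝ^{m×n₁}, D₀ ∈ ℝ^{m×m}, M ∈ ℝ^{m×m}, and suppose that for every s ∈ ℂ with Re(s) > 0 the matrix T(s) + T(s)^H is positive semidefinite, where T(s) = C₁(sI − A₁)^{-1}B₁ + D₀ + s·M. Then M = M^T, M is positive semidefinite, and for every s ∈ ℂ with Re(s) > 0 the matrix G(s) + G(s)^H is positive semidefinite, where G(s) = C₁(sI − A₁)^{-1}B₁ + D₀. -/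

import Mathlib

/-!
Testing `T(s) + T(s)ᴴ ⪰ 0` against a vector `x` gives `Re (f s + s q) ≥ 0` for `Re s > 0`, where
`f s = xᴴ G(s) x` and `q = xᴴ M x`. Since the resolvent `(sI - A₁)⁻¹` vanishes at infinity, `f`
stays bounded as `s → ∞`, so the linear term must satisfy `Re (w q) ≥ 0` whenever `Re w ≥ 0`,
i.e. `q ≥ 0`; this makes `M` symmetric positive semidefinite. Then `f` is holomorphic with
`Re f s ≥ -q Re s`, and a Phragmén–Lindelöf argument on the half-planes `Re s > δ` upgrades this
to `Re f ≥ 0`.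
-/

open Matrix
open scoped ComplexOrder

/-- View a real matrix as a complex matrix. -/
noncomputable def toC {k l : Type*} (M : Matrix k l ℝ) : Matrix k l ℂ :=
  M.map (fun x => (x : ℂ))

/-- The matrix pencil `s E - A`, viewed over `ℂ`. -/
noncomputable def pencil {n : ℕ} (E A : Matrix (Fin n) (Fin n) ℝ) (s : ℂ) :
    Matrix (Fin n) (Fin n) ℂ :=
  s • toC E - toC A

/-- The transfer function `T(s) = C (sE - A)⁻¹ B + D` of the descriptor system. -/
noncomputable def transfer {n m : ℕ} (E A : Matrix (Fin n) (Fin n) ℝ)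
    (B : Matrix (Fin n) (Fin m) ℝ) (C : Matrix (Fin m) (Fin n) ℝ)
    (D : Matrix (Fin m) (Fin m) ℝ) (s : ℂ) : Matrix (Fin m) (Fin m) ℂ :=
  toC C * (pencil E A s)⁻¹ * toC B + toC D

/-- A descriptor system is positive real if the pencil is invertible on the open right
half-plane and `T(s) + T(s)ᴴ` is positive semidefinite there. -/
def PositiveReal {n m : ℕ} (E A : Matrix (Fin n) (Fin n) ℝ)
    (B : Matrix (Fin n) (Fin m) ℝ) (C : Matrix (Fin m) (Fin n) ℝ)
    (D : Matrix (Fin m) (Fin m) ℝ) : Prop :=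
  ∀ s : ℂ, 0 < s.re → (pencil E A s).det ≠ 0 ∧
    (transfer E A B C D s + (transfer E A B C D s)ᴴ).PosSemidef

/-- Complete controllability: `[αE - βA, B]` has full row rank for all `(α,β) ≠ (0,0)`. -/
def CompletelyControllable {n m : ℕ} (E A : Matrix (Fin n) (Fin n) ℝ)
    (B : Matrix (Fin n) (Fin m) ℝ) : Prop :=
  ∀ α β : ℂ, ¬(α = 0 ∧ β = 0) →
    (fromCols (α • toC E - β • toC A) (toC B)).rank = n

/-- Complete observability: `[αE - βA; C]` has full column rank for all `(α,β) ≠ (0,0)`. -/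
def CompletelyObservable {n m : ℕ} (E A : Matrix (Fin n) (Fin n) ℝ)
    (C : Matrix (Fin m) (Fin n) ℝ) : Prop :=
  ∀ α β : ℂ, ¬(α = 0 ∧ β = 0) →
    (fromRows (α • toC E - β • toC A) (toC C)).rank = n

/-- A descriptor system `(E,A,B,C,D)` is port-Hamiltonian if it admits a pH decomposition. -/
def IsPortHamiltonian {n m : ℕ} (E A : Matrix (Fin n) (Fin n) ℝ)
    (B : Matrix (Fin n) (Fin m) ℝ) (C : Matrix (Fin m) (Fin n) ℝ)
    (D : Matrix (Fin m) (Fin m) ℝ) : Prop :=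
  ∃ (J R Q : Matrix (Fin n) (Fin n) ℝ) (G P : Matrix (Fin n) (Fin m) ℝ),
    A = (J - R) * Q ∧ B = G - P ∧ C = (G + P)ᵀ * Q ∧ Jᵀ = -J ∧
    (Eᵀ * Q).PosSemidef ∧
    (fromBlocks (Qᵀ * R * Q) (Qᵀ * P) (Pᵀ * Q) ((1/2 : ℝ) • (D + Dᵀ))).PosSemidef

/-- The KYP block matrix `[[AᵀQ + QᵀA, QᵀB - Cᵀ], [BᵀQ - C, -D - Dᵀ]]`. -/
def KYPmatrix {n m : ℕ} (A : Matrix (Fin n) (Fin n) ℝ)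
    (B : Matrix (Fin n) (Fin m) ℝ) (C : Matrix (Fin m) (Fin n) ℝ)
    (D : Matrix (Fin m) (Fin m) ℝ) (Q : Matrix (Fin n) (Fin n) ℝ) :
    Matrix (Fin n ⊕ Fin m) (Fin n ⊕ Fin m) ℝ :=
  fromBlocks (Aᵀ * Q + Qᵀ * A) (Qᵀ * B - Cᵀ) (Bᵀ * Q - C) (-D - Dᵀ)

open Filter Topology Bornology Set Asymptotics

namespace Complex

/-- Phragmén–Lindelöf applied to `exp (-f (· + δ))`, whose modulus is at most `exp (q δ)` on the
imaginary axis. -/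
theorem neg_mul_le_re_of_re_add_mul_re_nonneg {f : ℂ → ℂ} {q : ℝ}
    (hf : DifferentiableOn ℂ f {s | 0 < s.re})
    (hbdd : IsBoundedUnder (· ≥ ·) atTop fun x : ℝ => (f x).re)
    (hq : ∀ s : ℂ, 0 < s.re → 0 ≤ (f s).re + q * s.re) {δ : ℝ} (hδ : 0 < δ) {s : ℂ}
    (hs : δ ≤ s.re) : -(q * δ) ≤ (f s).re := by
  set g : ℂ → ℂ := fun z => exp (-f (z + δ))
  have hg : ∀ z, ‖g z‖ = Real.exp (-(f (z + δ)).re) := fun z => by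
    simp only [g, norm_exp, neg_re]
  have hfδ : ∀ z : ℂ, 0 ≤ z.re → -(f (z + δ)).re ≤ q * (z.re + δ) := fun z hz => by
    have := hq (z + δ) (by rw [add_re, ofReal_re]; linarith)
    rw [add_re, ofReal_re] at this
    linarith
  have hd : DiffContOnCl ℂ g {z | 0 < z.re} := by
    refine DifferentiableOn.diffContOnCl fun z hz => ?_
    rw [closure_setOfPred_lt_re, mem_ofPred_eq] at hz
    have hfz : DifferentiableAt ℂ f (z + δ) :=
      hf.differentiableAt ((isOpen_lt continuous_const continuous_re).mem_nhds
        (by rw [mem_ofPred_eq, add_re, ofReal_re]; linarith))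
    exact (hfz.comp z (differentiableAt_id.add_const _)).neg.cexp.differentiableWithinAt
  have hexp : ∃ c < (2 : ℝ), ∃ B,
      g =O[cobounded ℂ ⊓ 𝓟 {z | 0 < z.re}] fun z => Real.exp (B * ‖z‖ ^ c) := by
    refine ⟨1, one_lt_two, |q|, IsBigO.of_bound (Real.exp (|q| * δ)) ?_⟩
    refine eventually_inf_principal.2 (Eventually.of_forall fun z (hz : 0 < z.re) => ?_)
    rw [hg, Real.rpow_one, Real.norm_eq_abs, Real.abs_exp, ← Real.exp_add]
    refine Real.exp_le_exp.2 ((hfδ z hz.le).trans ?_)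
    nlinarith [le_abs_self q, abs_nonneg q, re_le_norm z]
  have hre : IsBoundedUnder (· ≤ ·) atTop fun x : ℝ => ‖g x‖ := by
    obtain ⟨b, hb⟩ := hbdd
    refine ⟨Real.exp (-b), eventually_map.2 ?_⟩
    filter_upwards [(tendsto_atTop_add_const_right atTop δ tendsto_id).eventually
      (eventually_map.1 hb)] with x hx
    rw [hg, Real.exp_le_exp, ← ofReal_add]
    exact neg_le_neg hx
  have him : ∀ y : ℝ, ‖g (y * I)‖ ≤ Real.exp (q * δ) := fun y => by
    rw [hg, Real.exp_le_exp]
    simpa using hfδ (y * I) (by simp)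
  have := PhragmenLindelof.right_half_plane_of_bounded_on_real hd hexp hre him
    (z := s - δ) (by simpa using hs)
  rw [hg, sub_add_cancel, Real.exp_le_exp] at this
  linarith

theorem re_nonneg_of_re_add_mul_re_nonneg {f : ℂ → ℂ} {q : ℝ}
    (hf : DifferentiableOn ℂ f {s | 0 < s.re})
    (hbdd : IsBoundedUnder (· ≥ ·) atTop fun x : ℝ => (f x).re)
    (hq : ∀ s : ℂ, 0 < s.re → 0 ≤ (f s).re + q * s.re) {s : ℂ} (hs : 0 < s.re) :
    0 ≤ (f s).re := by
  have hlim : Tendsto (fun δ : ℝ => -(q * δ)) (𝓝[>] 0) (𝓝 0) :=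
    ((by fun_prop : Continuous fun δ : ℝ => -(q * δ)).tendsto' 0 0 (by simp)).mono_left
      nhdsWithin_le_nhds
  exact le_of_tendsto hlim (eventually_of_mem (Ioo_mem_nhdsGT hs) fun δ hδ =>
    neg_mul_le_re_of_re_add_mul_re_nonneg hf hbdd hq hδ.1 hδ.2.le)

/-- Along `s = 1 + t w` the term `t (w q)` dominates the bounded `f s`. -/
theorem nonneg_of_re_add_mul_nonneg {f : ℂ → ℂ} {c q : ℂ} (hf : Tendsto f (cobounded ℂ) (𝓝 c))
    (h : ∀ s : ℂ, 0 < s.re → 0 ≤ (f s + s * q).re) : 0 ≤ q := by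
  have key : ∀ w : ℂ, 0 ≤ w.re → 0 ≤ (w * q).re := by
    intro w hw
    rcases eq_or_ne w 0 with rfl | hw0
    · simp
    have hs : Tendsto (fun t : ℝ => 1 + t * w) atTop (cobounded ℂ) :=
      (tendsto_const_add_cobounded 1).comp
        ((tendsto_mul_right_cobounded hw0).comp (RCLike.tendsto_ofReal_atTop_cobounded ℂ))
    have hlim : Tendsto (fun t : ℝ => -(f (1 + t * w) + q).re / t) atTop (𝓝 0) := by
      simpa using ((continuous_re.tendsto _).comp ((hf.comp hs).add_const q)).neg.div_atTop
        tendsto_id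
    refine le_of_tendsto hlim ?_
    filter_upwards [eventually_gt_atTop 0] with t ht
    rw [div_le_iff₀ ht]
    have := h (1 + t * w) (by rw [add_re, one_re, re_ofReal_mul]; positivity)
    simp only [add_mul, one_mul, mul_assoc, add_re, re_ofReal_mul] at this
    simp only [add_re]
    linarith
  have h1 := key 1 (by simp)
  have h2 := key I (by simp)
  have h3 := key (-I) (by simp)
  simp only [one_mul, I_mul_re, neg_mul, neg_re, neg_neg] at h1 h2 h3
  exact nonneg_iff.2 ⟨h1, by linarith⟩

theorem nonneg_and_re_nonneg_of_re_add_mul_nonneg {f : ℂ → ℂ} {c q : ℂ}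
    (hf : DifferentiableOn ℂ f {s | 0 < s.re}) (hlim : Tendsto f (cobounded ℂ) (𝓝 c))
    (h : ∀ s : ℂ, 0 < s.re → 0 ≤ (f s + s * q).re) :
    0 ≤ q ∧ ∀ s : ℂ, 0 < s.re → 0 ≤ (f s).re := by
  have hq := nonneg_of_re_add_mul_nonneg hlim h
  have hbdd : IsBoundedUnder (· ≥ ·) atTop fun x : ℝ => (f x).re :=
    ((continuous_re.tendsto c).comp
      (hlim.comp (RCLike.tendsto_ofReal_atTop_cobounded ℂ))).isBoundedUnder_ge
  refine ⟨hq, fun s hs => re_nonneg_of_re_add_mul_re_nonneg (q := q.re) hf hbdd (fun z hz => ?_) hs⟩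
  have := h z hz
  rwa [add_re, mul_re, ← (nonneg_iff.1 hq).2, mul_zero, sub_zero, mul_comm] at this

end Complex

namespace Matrix

variable {ι κ κ' : Type*} [Fintype ι] [Fintype κ] [Fintype κ']

theorem star_dotProduct_conjTranspose_mulVec (T : Matrix κ κ ℂ) (x : κ → ℂ) :
    star x ⬝ᵥ (Tᴴ *ᵥ x) = star (star x ⬝ᵥ (T *ᵥ x)) := by
  rw [dotProduct_mulVec, star_dotProduct, star_star, ← star_mulVec, dotProduct_comm]

theorem posSemidef_add_conjTranspose_iff (T : Matrix κ κ ℂ) :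
    (T + Tᴴ).PosSemidef ↔ ∀ x, 0 ≤ (star x ⬝ᵥ (T *ᵥ x)).re := by
  have hform : ∀ x, star x ⬝ᵥ ((T + Tᴴ) *ᵥ x) = ((2 * (star x ⬝ᵥ (T *ᵥ x)).re : ℝ) : ℂ) := by
    intro x
    rw [add_mulVec, dotProduct_add, star_dotProduct_conjTranspose_mulVec, Complex.star_def,
      Complex.add_conj]
  simp only [posSemidef_iff_dotProduct_mulVec, isHermitian_add_transpose_self, true_and, hform,
    Complex.zero_le_real]
  exact forall_congr' fun x => by constructor <;> intro h <;> linarith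

theorem posSemidef_iff_forall_dotProduct_mulVec_nonneg {A : Matrix κ κ ℂ} :
    A.PosSemidef ↔ ∀ x, 0 ≤ star x ⬝ᵥ (A *ᵥ x) := by
  classical
  refine ⟨PosSemidef.dotProduct_mulVec_nonneg, fun h => ?_⟩
  rw [← isPositive_toEuclideanLin_iff, LinearMap.isPositive_iff_complex]
  intro x
  obtain ⟨hre, him⟩ := Complex.nonneg_iff.1 (h (WithLp.ofLp x))
  have hreal := Complex.conj_eq_iff_im.2 him.symm
  have e : x.ofLp ⬝ᵥ star (A *ᵥ x.ofLp) = star (star x.ofLp ⬝ᵥ (A *ᵥ x.ofLp)) := by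
    rw [star_dotProduct, star_star, dotProduct_comm]
  simp only [EuclideanSpace.inner_eq_star_dotProduct, toLpLin_apply]
  rw [e, Complex.star_def, hreal]
  exact ⟨Complex.conj_eq_iff_re.1 hreal, hre⟩

theorem PosSemidef.of_toC {M : Matrix κ κ ℝ} (h : (toC M).PosSemidef) : M.PosSemidef := by
  refine PosSemidef.of_dotProduct_mulVec_nonneg ?_ fun x => ?_
  · ext i j
    simpa [toC] using congrFun (congrFun h.isHermitian i) j
  · have hx := h.dotProduct_mulVec_nonneg (fun i => (x i : ℂ))
    have e : star (fun i => (x i : ℂ)) ⬝ᵥ (toC M *ᵥ fun i => (x i : ℂ)) =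
        ((star x ⬝ᵥ (M *ᵥ x) : ℝ) : ℂ) := by
      simp [toC, dotProduct, mulVec]
    rwa [e, Complex.zero_le_real] at hx

theorem differentiableAt_dotProduct_mul_mul_add_mulVec (u : κ → ℂ) (v : κ' → ℂ)
    (C : Matrix κ ι ℂ) {R : ℂ → Matrix ι ι ℂ} (B : Matrix ι κ' ℂ) (D : Matrix κ κ' ℂ) {s₀ : ℂ}
    (hR : ∀ i j, DifferentiableAt ℂ (fun s => R s i j) s₀) :
    DifferentiableAt ℂ (fun s : ℂ => u ⬝ᵥ ((C * R s * B + D) *ᵥ v)) s₀ := by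
  have hentry : ∀ a b, DifferentiableAt ℂ (fun s => (C * R s * B + D) a b) s₀ := by
    intro a b
    simp only [Matrix.add_apply, mul_apply]
    fun_prop
  simp only [dotProduct, mulVec]
  exact .fun_sum fun a _ => .const_mul (.fun_sum fun b _ => (hentry a b).mul_const _) _

section Resolvent

variable [DecidableEq ι]

theorem resolvent_eq_inv_smul_one_sub {R : Type*} [CommRing R] (N : Matrix ι ι R) (s : R) :
    resolvent N s = (s • (1 : Matrix ι ι R) - N)⁻¹ := by
  rw [resolvent, nonsing_inv_eq_ringInverse, Algebra.algebraMap_eq_smul_one]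

theorem tendsto_inv_smul_one_sub_cobounded (N : Matrix ι ι ℂ) :
    Tendsto (fun s : ℂ => (s • (1 : Matrix ι ι ℂ) - N)⁻¹) (cobounded ℂ) (𝓝 0) := by
  let _ := Matrix.linftyOpNormedRing (n := ι) (α := ℂ)
  let _ := Matrix.linftyOpNormedAlgebra (n := ι) (R := ℂ) (α := ℂ)
  -- the operator norm induces the entrywise topology definitionally
  have h := spectrum.resolvent_tendsto_cobounded (𝕜 := ℂ) N
  rw [funext (resolvent_eq_inv_smul_one_sub N)] at h
  exact h

theorem differentiableAt_inv_smul_one_sub_apply {N : Matrix ι ι ℂ} {s₀ : ℂ}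
    (h : (s₀ • (1 : Matrix ι ι ℂ) - N).det ≠ 0) (i j : ι) :
    DifferentiableAt ℂ (fun s : ℂ => (s • (1 : Matrix ι ι ℂ) - N)⁻¹ i j) s₀ := by
  let _ := Matrix.linftyOpNormedRing (n := ι) (α := ℂ)
  let _ := Matrix.linftyOpNormedAlgebra (n := ι) (R := ℂ) (α := ℂ)
  have hs₀ : s₀ ∈ resolventSet ℂ N := by
    rw [spectrum.mem_resolventSet_iff, Algebra.algebraMap_eq_smul_one, isUnit_iff_isUnit_det]
    exact h.isUnit
  have hR := (spectrum.hasDerivAt_resolvent_const_left hs₀).differentiableAt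
  rw [funext (resolvent_eq_inv_smul_one_sub N)] at hR
  exact (entryLinearMap ℂ ℂ i j).toContinuousLinearMap.differentiableAt.comp s₀ hR

theorem tendsto_dotProduct_transfer_cobounded (u : κ → ℂ) (v : κ' → ℂ) (C : Matrix κ ι ℂ)
    (N : Matrix ι ι ℂ) (B : Matrix ι κ' ℂ) (D : Matrix κ κ' ℂ) :
    Tendsto (fun s : ℂ => u ⬝ᵥ ((C * (s • (1 : Matrix ι ι ℂ) - N)⁻¹ * B + D) *ᵥ v))
      (cobounded ℂ) (𝓝 (u ⬝ᵥ (D *ᵥ v))) := by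
  have hcont : Continuous fun R : Matrix ι ι ℂ => u ⬝ᵥ ((C * R * B + D) *ᵥ v) := by fun_prop
  simpa only [Function.comp_def, Matrix.mul_zero, Matrix.zero_mul, zero_add] using
    (hcont.tendsto 0).comp (tendsto_inv_smul_one_sub_cobounded N)

theorem differentiableAt_dotProduct_transfer (u : κ → ℂ) (v : κ' → ℂ) (C : Matrix κ ι ℂ)
    {N : Matrix ι ι ℂ} (B : Matrix ι κ' ℂ) (D : Matrix κ κ' ℂ) {s₀ : ℂ}
    (h : (s₀ • (1 : Matrix ι ι ℂ) - N).det ≠ 0) :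
    DifferentiableAt ℂ
      (fun s : ℂ => u ⬝ᵥ ((C * (s • (1 : Matrix ι ι ℂ) - N)⁻¹ * B + D) *ᵥ v)) s₀ :=
  differentiableAt_dotProduct_mul_mul_add_mulVec u v C (R := fun s => (s • 1 - N)⁻¹) B D
    (differentiableAt_inv_smul_one_sub_apply h)

end Resolvent

end Matrix

/-- The linear polynomial part of a positive real transfer function is
symmetric positive semidefinite, and the proper part is again positive real. -/
theorem linear_part_of_positive_real {n₁ m : ℕ}
    (A₁ : Matrix (Fin n₁) (Fin n₁) ℝ) (B₁ : Matrix (Fin n₁) (Fin m) ℝ)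
    (C₁ : Matrix (Fin m) (Fin n₁) ℝ) (D₀ M : Matrix (Fin m) (Fin m) ℝ)
    (hA : ∀ lam : ℂ, 0 < lam.re →
      (lam • (1 : Matrix (Fin n₁) (Fin n₁) ℂ) - toC A₁).det ≠ 0)
    (hpr : ∀ s : ℂ, 0 < s.re →
      ((toC C₁ * (s • (1 : Matrix (Fin n₁) (Fin n₁) ℂ) - toC A₁)⁻¹ * toC B₁
          + toC D₀ + s • toC M) +
        (toC C₁ * (s • (1 : Matrix (Fin n₁) (Fin n₁) ℂ) - toC A₁)⁻¹ * toC B₁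
          + toC D₀ + s • toC M)ᴴ).PosSemidef) :
    M = Mᵀ ∧ M.PosSemidef ∧
      ∀ s : ℂ, 0 < s.re →
        ((toC C₁ * (s • (1 : Matrix (Fin n₁) (Fin n₁) ℂ) - toC A₁)⁻¹ * toC B₁
            + toC D₀) +
          (toC C₁ * (s • (1 : Matrix (Fin n₁) (Fin n₁) ℂ) - toC A₁)⁻¹ * toC B₁
            + toC D₀)ᴴ).PosSemidef := by
  have key : ∀ x : Fin m → ℂ, 0 ≤ star x ⬝ᵥ (toC M *ᵥ x) ∧ ∀ s : ℂ, 0 < s.re →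
      0 ≤ (star x ⬝ᵥ ((toC C₁ * (s • (1 : Matrix (Fin n₁) (Fin n₁) ℂ) - toC A₁)⁻¹ * toC B₁
        + toC D₀) *ᵥ x)).re := by
    intro x
    refine Complex.nonneg_and_re_nonneg_of_re_add_mul_nonneg (fun s hs =>
      (differentiableAt_dotProduct_transfer _ _ _ _ _ (hA s hs)).differentiableWithinAt)
      (tendsto_dotProduct_transfer_cobounded _ _ _ _ _ _) fun s hs => ?_
    have := (posSemidef_add_conjTranspose_iff _).1 (hpr s hs) x
    rwa [add_mulVec, smul_mulVec, dotProduct_add, dotProduct_smul, smul_eq_mul] at this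
  have hM : M.PosSemidef :=
    PosSemidef.of_toC (posSemidef_iff_forall_dotProduct_mulVec_nonneg.2 fun x => (key x).1)
  refine ⟨?_, hM, fun s hs => (posSemidef_add_conjTranspose_iff _).2 fun x => (key x).2 s hs⟩
  rw [← conjTranspose_eq_transpose_of_trivial]
  exact hM.isHermitian.symm
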